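/- arXiv:math/0105076 — 8 statements merged into one kernel-verified Lean document; each statement's English description precedes it below -/
import Mathlib

section
/- For every step index i with 1 ≤ i ≤ m, and every j ≤ i, the Abaffian matrix produced after i updates of the scaled ABS recursion annihilates all previously used scaling and projection vectors: H_{i+1} Aᵀ v_j = 0 and H_{i+1}ᵀ w_j = 0. -/
/-!
Each step is Wedderburn's rank-one reduction `H ↦ H - (yᵀHx)⁻¹ (Hx)(yᵀH)`. It kills `x` on the
right and `y` on the left, and it keeps every right null vector and every left null vector of `H`,
since the correction term is a multiple of `Hx` on the right and of `yᵀH` on the left.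
-/

open Matrix

namespace Matrix

variable {K ι κ : Type*} [Field K] [Fintype ι] [Fintype κ]

/-- The scaled ABS step is `H (j+1) = wedderburnUpdate (H j) (Aᵀ *ᵥ v j) (w j)`. -/
def wedderburnUpdate (H : Matrix ι κ K) (x : κ → K) (y : ι → K) : Matrix ι κ K :=
  H - (y ⬝ᵥ (H *ᵥ x))⁻¹ • vecMulVec (H *ᵥ x) (y ᵥ* H)

variable (H : Matrix ι κ K) (x : κ → K) (y : ι → K)

theorem wedderburnUpdate_mulVec (z : κ → K) :
    wedderburnUpdate H x y *ᵥ z =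
      H *ᵥ z - ((y ⬝ᵥ (H *ᵥ x))⁻¹ * (y ⬝ᵥ (H *ᵥ z))) • (H *ᵥ x) := by
  rw [wedderburnUpdate, sub_mulVec, smul_mulVec, vecMulVec_mulVec, op_smul_eq_smul,
    ← dotProduct_mulVec, smul_smul]

theorem vecMul_wedderburnUpdate (z : ι → K) :
    z ᵥ* wedderburnUpdate H x y =
      z ᵥ* H - ((y ⬝ᵥ (H *ᵥ x))⁻¹ * (z ⬝ᵥ (H *ᵥ x))) • (y ᵥ* H) := by
  rw [wedderburnUpdate, vecMul_sub, vecMul_smul, vecMul_vecMulVec, smul_smul]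

theorem wedderburnUpdate_mulVec_self (h : y ⬝ᵥ (H *ᵥ x) ≠ 0) :
    wedderburnUpdate H x y *ᵥ x = 0 := by
  rw [wedderburnUpdate_mulVec, inv_mul_cancel₀ h, one_smul, sub_self]

theorem vecMul_wedderburnUpdate_self (h : y ⬝ᵥ (H *ᵥ x) ≠ 0) :
    y ᵥ* wedderburnUpdate H x y = 0 := by
  rw [vecMul_wedderburnUpdate, inv_mul_cancel₀ h, one_smul, sub_self]

theorem wedderburnUpdate_mulVec_eq_zero {z : κ → K} (hz : H *ᵥ z = 0) :
    wedderburnUpdate H x y *ᵥ z = 0 := by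
  rw [wedderburnUpdate_mulVec, hz, dotProduct_zero, mul_zero, zero_smul, sub_zero]

theorem vecMul_wedderburnUpdate_eq_zero {z : ι → K} (hz : z ᵥ* H = 0) :
    z ᵥ* wedderburnUpdate H x y = 0 := by
  rw [vecMul_wedderburnUpdate, dotProduct_mulVec z, hz, zero_dotProduct, mul_zero, zero_smul,
    sub_zero]

end Matrix

/-- After `i` updates of the scaled ABS recursion, the Abaffian matrix `H (i+1)`
annihilates all previously used scaling vectors `v j` (via `Aᵀ`) and all
previously used projection vectors `w j` (via the transpose). -/
theorem abs_scaled_abaffian_annihilation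
    (m n : ℕ) (A : Matrix (Fin m) (Fin n) ℝ)
    (H : ℕ → Matrix (Fin n) (Fin n) ℝ)
    (v : ℕ → Fin m → ℝ) (w : ℕ → Fin n → ℝ)
    (hden : ∀ j, 1 ≤ j → j ≤ m → w j ⬝ᵥ (H j *ᵥ (Aᵀ *ᵥ v j)) ≠ 0)
    (hupd : ∀ j, 1 ≤ j → j ≤ m →
      H (j + 1) = H j -
        (w j ⬝ᵥ (H j *ᵥ (Aᵀ *ᵥ v j)))⁻¹ •
          vecMulVec (H j *ᵥ (Aᵀ *ᵥ v j)) (w j ᵥ* H j)) :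
    ∀ i, 1 ≤ i → i ≤ m → ∀ j, 1 ≤ j → j ≤ i →
      H (i + 1) *ᵥ (Aᵀ *ᵥ v j) = 0 ∧ (H (i + 1))ᵀ *ᵥ w j = 0 := by
  suffices h : ∀ i ≤ m, ∀ j, 1 ≤ j → j ≤ i →
      H (i + 1) *ᵥ (Aᵀ *ᵥ v j) = 0 ∧ w j ᵥ* H (i + 1) = 0 from
    fun i _ him j hj hji => by rw [mulVec_transpose (H (i + 1))]; exact h i him j hj hji
  intro i
  induction i with
  | zero => intro _ j hj hj0; omega
  | succ i ih =>
    intro him j hj hji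
    have hstep : H (i + 1 + 1) = wedderburnUpdate (H (i + 1)) (Aᵀ *ᵥ v (i + 1)) (w (i + 1)) :=
      hupd (i + 1) (by omega) him
    rw [hstep]
    rcases Nat.le_succ_iff.mp hji with hjle | rfl
    · obtain ⟨hright, hleft⟩ := ih (by omega) j hj hjle
      exact ⟨wedderburnUpdate_mulVec_eq_zero _ _ _ hright,
        vecMul_wedderburnUpdate_eq_zero _ _ _ hleft⟩
    · have hne := hden (i + 1) (by omega) him
      exact ⟨wedderburnUpdate_mulVec_self _ _ _ hne, vecMul_wedderburnUpdate_self _ _ _ hne⟩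
end

section
/- After i steps of the scaled ABS iteration the iterate x_{i+1} solves the first i scaled equations: for every j ≤ i one has v_jᵀ (A x_{i+1} − b) = 0. -/
open Matrix

lemma vecMulVec_mulVec' {n : ℕ} (a b u : Fin n → ℝ) :
    vecMulVec a b *ᵥ u = (b ⬝ᵥ u) • a := by
  ext i
  simp [mulVec, vecMulVec, dotProduct, Finset.mul_sum, mul_comm, mul_left_comm]

/-- After `i` steps of the scaled ABS iteration, the iterate `x (i+1)` solves the
first `i` scaled equations: `v j ⬝ᵥ (A *ᵥ x (i+1) - b) = 0` for all `j ≤ i`. -/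
theorem abs_scaled_solves_subsystem
    (m n : ℕ) (A : Matrix (Fin m) (Fin n) ℝ) (b : Fin m → ℝ)
    (H : ℕ → Matrix (Fin n) (Fin n) ℝ) (x : ℕ → Fin n → ℝ)
    (v : ℕ → Fin m → ℝ) (w z p : ℕ → Fin n → ℝ)
    (i : ℕ) (him : i ≤ m)
    (hden : ∀ j, 1 ≤ j → j ≤ i → w j ⬝ᵥ (H j *ᵥ (Aᵀ *ᵥ v j)) ≠ 0)
    (hupd : ∀ j, 1 ≤ j → j ≤ i →
      H (j + 1) = H j -
        (w j ⬝ᵥ (H j *ᵥ (Aᵀ *ᵥ v j)))⁻¹ •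
          vecMulVec (H j *ᵥ (Aᵀ *ᵥ v j)) (w j ᵥ* H j))
    (hp : ∀ j, 1 ≤ j → j ≤ i → p j = (H j)ᵀ *ᵥ z j)
    (hpA : ∀ j, 1 ≤ j → j ≤ i → v j ⬝ᵥ (A *ᵥ p j) ≠ 0)
    (hx : ∀ j, 1 ≤ j → j ≤ i →
      x (j + 1) = x j - ((v j ⬝ᵥ (A *ᵥ x j - b)) / (v j ⬝ᵥ (A *ᵥ p j))) • p j) :
    ∀ j, 1 ≤ j → j ≤ i → v j ⬝ᵥ (A *ᵥ x (i + 1) - b) = 0 := by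
  intro j hj1 hji
  -- H k annihilates Aᵀ v j for k > j
  have hH : ∀ k, j < k → k ≤ i + 1 → H k *ᵥ (Aᵀ *ᵥ v j) = 0 := by
    intro k hk
    induction k with
    | zero => omega
    | succ k ih =>
      intro hki
      rcases Nat.lt_or_ge j k with hjk | hjk
      · -- k > j, use inductive hypothesis
        have hk1 : 1 ≤ k := by omega
        have hkle : k ≤ i := by omega
        have h0 : H k *ᵥ (Aᵀ *ᵥ v j) = 0 := ih hjk (by omega)
        rw [hupd k hk1 hkle, sub_mulVec, smul_mulVec, vecMulVec_mulVec',
          h0]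
        have : (w k ᵥ* H k) ⬝ᵥ (Aᵀ *ᵥ v j) = 0 := by
          rw [← dotProduct_mulVec, h0, dotProduct_zero]
        rw [this]
        simp
      · -- k = j
        have hkj : k = j := by omega
        subst hkj
        have hk1 : 1 ≤ k := hj1
        have hkle : k ≤ i := by omega
        rw [hupd k hk1 hkle, sub_mulVec, smul_mulVec, vecMulVec_mulVec']
        have : (w k ᵥ* H k) ⬝ᵥ (Aᵀ *ᵥ v k) = w k ⬝ᵥ (H k *ᵥ (Aᵀ *ᵥ v k)) := by
          rw [← dotProduct_mulVec]
        rw [this, smul_smul, inv_mul_cancel₀ (hden k hk1 hkle), one_smul,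
          sub_self]
  -- hence for j < k ≤ i, v j ⬝ᵥ A *ᵥ p k = 0
  have hAp : ∀ k, j < k → k ≤ i → v j ⬝ᵥ (A *ᵥ p k) = 0 := by
    intro k hjk hki
    rw [hp k (by omega) hki, dotProduct_mulVec, ← mulVec_transpose,
      dotProduct_mulVec, ← mulVec_transpose, transpose_transpose,
      hH k hjk (by omega)]
    simp
  -- show by induction: for all k with j ≤ k ≤ i, v j ⬝ᵥ (A *ᵥ x (k+1) - b) = 0
  have key : ∀ k, j ≤ k → k ≤ i → v j ⬝ᵥ (A *ᵥ x (k + 1) - b) = 0 := by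
    intro k hk
    induction k with
    | zero => omega
    | succ k ih =>
      intro hki
      rcases Nat.lt_or_ge j (k + 1) with hjk | hjk
      · rcases Nat.lt_or_ge j k.succ with _ | _
        · by_cases hjk' : j ≤ k
          · -- step: x(k+2) relates to x(k+1)
            have h1 : 1 ≤ k + 1 := by omega
            have hr := ih hjk' (by omega)
            rw [hx (k + 1) h1 hki, mulVec_sub, sub_right_comm,
              dotProduct_sub, hr, mulVec_smul, dotProduct_smul,
              hAp (k + 1) (by omega) hki]
            simp
          · omega
        · omega
      · -- base: k + 1 = j
        have hkj : k + 1 = j := by omega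
        rw [hkj, hx j hj1 hji]
        have hd := hpA j hj1 hji
        rw [mulVec_sub, sub_right_comm, dotProduct_sub, mulVec_smul,
          dotProduct_smul, smul_eq_mul, div_mul_cancel₀ _ hd, sub_self]
  exact key i hji le_rfl
end

section
/- The general solution of the scaled subsystem is parametrized by the Abaffian: if H is a real n×n matrix with H Aᵀ V = 0 and rank H = n − i, the m×i matrix V is such that Vᵀ A has rank i, and x₀ ∈ ℝⁿ satisfies Vᵀ A x₀ = Vᵀ b, then the solution set {x ∈ ℝⁿ : Vᵀ A x = Vᵀ b} equals {x₀ + Hᵀ q : q ∈ ℝⁿ}. -/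
open Matrix

/-- The general solution of the scaled subsystem is parametrized by the Abaffian:
if `H Aᵀ V = 0`, `rank H = n - i`, `rank (Vᵀ A) = i`, and `x₀` solves
`Vᵀ A x = Vᵀ b`, then the solution set equals `{x₀ + Hᵀ q : q ∈ ℝⁿ}`. -/
theorem abs_general_solution
    (m n i : ℕ) (hin : i ≤ n)
    (A : Matrix (Fin m) (Fin n) ℝ) (b : Fin m → ℝ)
    (V : Matrix (Fin m) (Fin i) ℝ) (H : Matrix (Fin n) (Fin n) ℝ)
    (x₀ : Fin n → ℝ)
    (hHV : H * Aᵀ * V = 0)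
    (hrankH : H.rank = n - i)
    (hrankVA : (Vᵀ * A).rank = i)
    (hx₀ : Vᵀ *ᵥ (A *ᵥ x₀) = Vᵀ *ᵥ b) :
    {x : Fin n → ℝ | Vᵀ *ᵥ (A *ᵥ x) = Vᵀ *ᵥ b} =
      {x : Fin n → ℝ | ∃ q : Fin n → ℝ, x = x₀ + Hᵀ *ᵥ q} := by
  set f := (Vᵀ * A).mulVecLin with hf
  set g := Hᵀ.mulVecLin with hg
  have hVAH : Vᵀ * A * Hᵀ = 0 := by
    have := congrArg Matrix.transpose hHV
    simpa [Matrix.transpose_mul, Matrix.mul_assoc] using this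
  have hle : LinearMap.range g ≤ LinearMap.ker f := by
    rintro x ⟨q, rfl⟩
    simp only [LinearMap.mem_ker, hf, hg, Matrix.mulVecLin_apply,
      Matrix.mulVec_mulVec, ← Matrix.mul_assoc, hVAH, Matrix.zero_mulVec]
  have hrg : Module.finrank ℝ (LinearMap.range g) = n - i := by
    have : Hᵀ.rank = n - i := by rw [Matrix.rank_transpose]; exact hrankH
    simpa [Matrix.rank] using this
  have hkf : Module.finrank ℝ (LinearMap.ker f) = n - i := by
    have hrn := LinearMap.finrank_range_add_finrank_ker f
    have hrf : Module.finrank ℝ (LinearMap.range f) = i := by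
      simpa [Matrix.rank] using hrankVA
    have : Module.finrank ℝ (Fin n → ℝ) = n := by simp
    omega
  have hEq : LinearMap.range g = LinearMap.ker f :=
    Submodule.eq_of_le_of_finrank_le hle (by rw [hrg, hkf])
  ext x
  simp only [Set.mem_setOf_eq]
  constructor
  · intro hx
    have hker : x - x₀ ∈ LinearMap.ker f := by
      simp only [LinearMap.mem_ker, hf, Matrix.mulVecLin_apply]
      rw [Matrix.mulVec_sub, sub_eq_zero, ← Matrix.mulVec_mulVec, ← Matrix.mulVec_mulVec,
        hx, hx₀]
    rw [← hEq] at hker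
    obtain ⟨q, hq⟩ := hker
    refine ⟨q, ?_⟩
    have hq' : Hᵀ *ᵥ q = x - x₀ := hq
    rw [hq']
    abel
  · rintro ⟨q, rfl⟩
    have : f (Hᵀ *ᵥ q) = 0 := hle ⟨q, rfl⟩
    simp only [hf, Matrix.mulVecLin_apply, ← Matrix.mulVec_mulVec] at this
    rw [Matrix.mulVec_add, Matrix.mulVec_add, this, add_zero, hx₀]
end

section
/- The Huang algorithm started at zero computes the minimum-norm solution: under the Huang recursion with iterates x₁ = 0 and x_{j+1} = x_j − ((a_jᵀ x_j − b_j)/d_j) p_j for j = 1,…,m, the final iterate satisfies A x_{m+1} = b, x_{m+1} ∈ Range(Aᵀ), and ‖x_{m+1}‖ ≤ ‖x‖ for every x ∈ ℝⁿ with A x = b. -/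
/-!
Each `H j` is symmetric and annihilates the rows `a i` with `i < j`, so `p j = H j a j` is
orthogonal to the earlier rows and the step from `x j` to `x (j+1)` solves the `j`-th equation
without disturbing the earlier ones; hence `x (m+1)` solves the system. Moreover `v - H j v`
lies in the span of the earlier rows, hence so do `p j` and, starting from `x 1 = 0`, every
iterate. A solution in `Range Aᵀ` is orthogonal to `ker A`, which contains the difference of any
two solutions, so Pythagoras makes it the one of least norm.
-/

open Matrix

theorem Matrix.IsSymm.mulVec_dotProduct {K ι : Type*} [CommSemiring K] [Fintype ι]
    {M : Matrix ι ι K} (hM : M.IsSymm) (u v : ι → K) : M *ᵥ u ⬝ᵥ v = u ⬝ᵥ M *ᵥ v := by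
  conv_lhs => rw [← hM.eq]
  rw [dotProduct_comm, dotProduct_transpose_mulVec]

theorem Matrix.norm_toLp_le_of_mulVec_eq {m n : Type*} [Fintype m] [Fintype n]
    (A : Matrix m n ℝ) (u : m → ℝ) {x : n → ℝ} (hx : A *ᵥ x = A *ᵥ (Aᵀ *ᵥ u)) :
    ‖WithLp.toLp 2 (Aᵀ *ᵥ u)‖ ≤ ‖WithLp.toLp 2 x‖ := by
  set y := Aᵀ *ᵥ u
  have horth : inner ℝ (WithLp.toLp 2 y) (WithLp.toLp 2 (x - y)) = 0 := by
    rw [EuclideanSpace.inner_toLp_toLp, star_trivial, dotProduct_transpose_mulVec, mulVec_sub,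
      hx, sub_self, dotProduct_zero]
  have hpyth := norm_add_sq_eq_norm_sq_add_norm_sq_real horth
  rw [← WithLp.toLp_add, add_sub_cancel] at hpyth
  rw [mul_self_le_mul_self_iff (norm_nonneg _) (norm_nonneg _), hpyth]
  exact le_add_of_nonneg_right (mul_self_nonneg _)

theorem span_image_Ico_mono {K M : Type*} [Semiring K] [AddCommMonoid M] [Module K M]
    (a : ℕ → M) {i j : ℕ} (hij : i ≤ j) :
    Submodule.span K (a '' Set.Ico 1 i) ≤ Submodule.span K (a '' Set.Ico 1 j) :=
  Submodule.span_mono (Set.image_mono (Set.Ico_subset_Ico_right hij))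

theorem mem_span_image_Ico_succ {K M : Type*} [Semiring K] [AddCommMonoid M] [Module K M]
    (a : ℕ → M) {j : ℕ} (hj : 1 ≤ j) :
    a j ∈ Submodule.span K (a '' Set.Ico 1 (j + 1)) :=
  Submodule.subset_span ⟨j, ⟨hj, j.lt_succ_self⟩, rfl⟩

/-- The Huang recursion on the rows `a 1, …, a m`, indexed from `1` as in the paper;
`a j ⬝ᵥ p j` is the pivot `d_j`. -/
structure IsHuangRecursion {K ι : Type*} [Field K] [Fintype ι] [DecidableEq ι] (m : ℕ)
    (a : ℕ → ι → K) (H : ℕ → Matrix ι ι K) (p : ℕ → ι → K) : Prop where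
  H_one : H 1 = 1
  p_eq : ∀ j, 1 ≤ j → j ≤ m → p j = H j *ᵥ a j
  dotProduct_ne_zero : ∀ j, 1 ≤ j → j ≤ m → a j ⬝ᵥ p j ≠ 0
  H_succ : ∀ j, 1 ≤ j → j ≤ m → H (j + 1) = H j - (a j ⬝ᵥ p j)⁻¹ • vecMulVec (p j) (p j)

namespace IsHuangRecursion

variable {K ι : Type*} [Field K] [Fintype ι] [DecidableEq ι] {m : ℕ} {a : ℕ → ι → K}
  {H : ℕ → Matrix ι ι K} {p : ℕ → ι → K}

theorem H_succ_mulVec (h : IsHuangRecursion m a H p) {j : ℕ} (hj : 1 ≤ j) (hjm : j ≤ m)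
    (v : ι → K) : H (j + 1) *ᵥ v = H j *ᵥ v - (a j ⬝ᵥ p j)⁻¹ • (p j ⬝ᵥ v) • p j := by
  rw [h.H_succ j hj hjm, sub_mulVec, smul_mulVec, vecMulVec_mulVec, op_smul_eq_smul]

theorem isSymm_H (h : IsHuangRecursion m a H p) {j : ℕ} (hj : 1 ≤ j) (hjm : j ≤ m + 1) :
    (H j).IsSymm := by
  induction j, hj using Nat.le_induction with
  | base => rw [h.H_one]; exact isSymm_one
  | succ j hj ih =>
    rw [h.H_succ j hj (by omega)]
    refine (ih (by omega)).sub (IsSymm.smul ?_ _)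
    exact IsSymm.ext fun i k => mul_comm _ _

theorem H_mulVec_eq_zero (h : IsHuangRecursion m a H p) {i j : ℕ} (hi : 1 ≤ i) (hij : i < j)
    (hjm : j ≤ m + 1) : H j *ᵥ a i = 0 := by
  induction j, (show 1 ≤ j by omega) using Nat.le_induction with
  | base => omega
  | succ j hj ih =>
    rw [h.H_succ_mulVec hj (by omega)]
    rcases (Nat.lt_succ_iff.mp hij).eq_or_lt with rfl | hlt
    · rw [dotProduct_comm (p i), ← h.p_eq i hj (by omega), smul_smul,
        inv_mul_cancel₀ (h.dotProduct_ne_zero i hj (by omega)), one_smul, sub_self]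
    · have hHa : H j *ᵥ a i = 0 := ih hlt (by omega)
      rw [h.p_eq j hj (by omega), (h.isSymm_H hj (by omega)).mulVec_dotProduct, hHa,
        dotProduct_zero, zero_smul, smul_zero, sub_zero]

theorem dotProduct_p_eq_zero (h : IsHuangRecursion m a H p) {i j : ℕ} (hi : 1 ≤ i)
    (hij : i < j) (hjm : j ≤ m) : a i ⬝ᵥ p j = 0 := by
  rw [h.p_eq j (by omega) hjm, ← (h.isSymm_H (by omega) (by omega)).mulVec_dotProduct,
    h.H_mulVec_eq_zero hi hij (by omega), zero_dotProduct]

theorem sub_mulVec_mem_span (h : IsHuangRecursion m a H p) {j : ℕ} (hj : 1 ≤ j)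
    (hjm : j ≤ m + 1) : ∀ v, v - H j *ᵥ v ∈ Submodule.span K (a '' Set.Ico 1 j) := by
  induction j, hj using Nat.le_induction with
  | base => intro v; rw [h.H_one, one_mulVec, sub_self]; exact Submodule.zero_mem _
  | succ j hj ih =>
    intro v
    have hmono := span_image_Ico_mono (K := K) a j.le_succ
    have hpj : p j ∈ Submodule.span K (a '' Set.Ico 1 (j + 1)) := by
      have := Submodule.sub_mem _ (mem_span_image_Ico_succ a hj) (hmono (ih (by omega) (a j)))
      rwa [sub_sub_cancel, ← h.p_eq j hj (by omega)] at this
    rw [h.H_succ_mulVec hj (by omega), sub_sub_eq_add_sub, add_sub_right_comm]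
    exact Submodule.add_mem _ (hmono (ih (by omega) v))
      (Submodule.smul_mem _ _ (Submodule.smul_mem _ _ hpj))

theorem p_mem_span (h : IsHuangRecursion m a H p) {j : ℕ} (hj : 1 ≤ j) (hjm : j ≤ m) :
    p j ∈ Submodule.span K (a '' Set.Ico 1 (j + 1)) := by
  have := Submodule.sub_mem _ (mem_span_image_Ico_succ a hj)
    (span_image_Ico_mono (K := K) a j.le_succ (h.sub_mulVec_mem_span hj (by omega) (a j)))
  rwa [sub_sub_cancel, ← h.p_eq j hj hjm] at this

theorem dotProduct_iterate (h : IsHuangRecursion m a H p) {β : ℕ → K} {x : ℕ → ι → K}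
    (hx : ∀ j, 1 ≤ j → j ≤ m →
      x (j + 1) = x j - ((a j ⬝ᵥ x j - β j) / (a j ⬝ᵥ p j)) • p j)
    {i j : ℕ} (hi : 1 ≤ i) (hij : i < j) (hjm : j ≤ m + 1) : a i ⬝ᵥ x j = β i := by
  induction j, (show 1 ≤ j by omega) using Nat.le_induction with
  | base => omega
  | succ j hj ih =>
    rw [hx j hj (by omega), dotProduct_sub, dotProduct_smul, smul_eq_mul]
    rcases (Nat.lt_succ_iff.mp hij).eq_or_lt with rfl | hlt
    · rw [div_mul_cancel₀ _ (h.dotProduct_ne_zero i hj (by omega)), sub_sub_cancel]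
    · rw [h.dotProduct_p_eq_zero hi hlt (by omega), mul_zero, sub_zero, ih hlt (by omega)]

theorem iterate_mem_span (h : IsHuangRecursion m a H p) {β : ℕ → K} {x : ℕ → ι → K}
    (hx1 : x 1 = 0)
    (hx : ∀ j, 1 ≤ j → j ≤ m →
      x (j + 1) = x j - ((a j ⬝ᵥ x j - β j) / (a j ⬝ᵥ p j)) • p j)
    {j : ℕ} (hj : 1 ≤ j) (hjm : j ≤ m + 1) : x j ∈ Submodule.span K (a '' Set.Ico 1 j) := by
  induction j, hj using Nat.le_induction with
  | base => rw [hx1]; exact Submodule.zero_mem _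
  | succ j hj ih =>
    rw [hx j hj (by omega)]
    exact Submodule.sub_mem _
      (span_image_Ico_mono (K := K) a j.le_succ (ih (by omega)))
      (Submodule.smul_mem _ _ (h.p_mem_span hj (by omega)))

end IsHuangRecursion

theorem huang_computes_min_norm_solution_general
    (m n : ℕ) (A : Matrix (Fin m) (Fin n) ℝ) (b : Fin m → ℝ)
    (a : ℕ → Fin n → ℝ) (ha : ∀ j : Fin m, a ((j : ℕ) + 1) = A j)
    (β : ℕ → ℝ) (hβ : ∀ j : Fin m, β ((j : ℕ) + 1) = b j)
    (H : ℕ → Matrix (Fin n) (Fin n) ℝ) (p : ℕ → Fin n → ℝ)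
    (x : ℕ → Fin n → ℝ)
    (hH1 : H 1 = 1)
    (hp : ∀ j, 1 ≤ j → j ≤ m → p j = H j *ᵥ a j)
    (hd : ∀ j, 1 ≤ j → j ≤ m → a j ⬝ᵥ p j ≠ 0)
    (hupd : ∀ j, 1 ≤ j → j ≤ m →
      H (j + 1) = H j - (a j ⬝ᵥ p j)⁻¹ • vecMulVec (p j) (p j))
    (hx1 : x 1 = 0)
    (hx : ∀ j, 1 ≤ j → j ≤ m →
      x (j + 1) = x j - ((a j ⬝ᵥ x j - β j) / (a j ⬝ᵥ p j)) • p j) :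
    A *ᵥ x (m + 1) = b ∧
    (∃ u : Fin m → ℝ, x (m + 1) = Aᵀ *ᵥ u) ∧
    (∀ x' : Fin n → ℝ, A *ᵥ x' = b →
      ‖(EuclideanSpace.equiv (Fin n) ℝ).symm (x (m + 1))‖ ≤
        ‖(EuclideanSpace.equiv (Fin n) ℝ).symm x'‖) := by
  have h : IsHuangRecursion m a H p := ⟨hH1, hp, hd, hupd⟩
  have hsol : A *ᵥ x (m + 1) = b := funext fun i => by
    rw [← hβ i, ← h.dotProduct_iterate hx (Nat.le_add_left 1 i) (by omega) le_rfl, ha i]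
    rfl
  have hrows : a '' Set.Ico 1 (m + 1) ⊆ Set.range Aᵀ.col := by
    rintro _ ⟨j, ⟨hj1, hjm⟩, rfl⟩
    obtain ⟨k, rfl⟩ : ∃ k, j = k + 1 := ⟨j - 1, by omega⟩
    exact ⟨⟨k, by omega⟩, (ha ⟨k, by omega⟩).symm⟩
  obtain ⟨u, hu⟩ : x (m + 1) ∈ LinearMap.range Aᵀ.mulVecLin := by
    rw [range_mulVecLin]
    exact Submodule.span_mono hrows (h.iterate_mem_span hx1 hx (by omega) le_rfl)
  rw [← hu, mulVecLin_apply] at hsol ⊢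
  exact ⟨hsol, ⟨u, rfl⟩, fun x' hx' => A.norm_toLp_le_of_mulVec_eq u (hx'.trans hsol.symm)⟩

/-- The Huang algorithm started at zero computes the minimum-norm solution of a
compatible system `A x = b`: the final iterate `x (m+1)` solves the system, lies
in `Range Aᵀ`, and has minimal Euclidean norm among all solutions. -/
theorem huang_computes_min_norm_solution
    (m n : ℕ) (A : Matrix (Fin m) (Fin n) ℝ) (b : Fin m → ℝ)
    (a : ℕ → Fin n → ℝ) (ha : ∀ j : Fin m, a ((j : ℕ) + 1) = A j)
    (β : ℕ → ℝ) (hβ : ∀ j : Fin m, β ((j : ℕ) + 1) = b j)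
    (H : ℕ → Matrix (Fin n) (Fin n) ℝ) (p : ℕ → Fin n → ℝ)
    (x : ℕ → Fin n → ℝ)
    (hH1 : H 1 = 1)
    (hp : ∀ j, 1 ≤ j → j ≤ m → p j = H j *ᵥ a j)
    (hd : ∀ j, 1 ≤ j → j ≤ m → a j ⬝ᵥ p j ≠ 0)
    (hupd : ∀ j, 1 ≤ j → j ≤ m →
      H (j + 1) = H j - (a j ⬝ᵥ p j)⁻¹ • vecMulVec (p j) (p j))
    (hx1 : x 1 = 0)
    (hx : ∀ j, 1 ≤ j → j ≤ m →
      x (j + 1) = x j - ((a j ⬝ᵥ x j - β j) / (a j ⬝ᵥ p j)) • p j)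
    (hcompat : ∃ x' : Fin n → ℝ, A *ᵥ x' = b) :
    A *ᵥ x (m + 1) = b ∧
    (∃ u : Fin m → ℝ, x (m + 1) = Aᵀ *ᵥ u) ∧
    (∀ x' : Fin n → ℝ, A *ᵥ x' = b →
      ‖(EuclideanSpace.equiv (Fin n) ℝ).symm (x (m + 1))‖ ≤
        ‖(EuclideanSpace.equiv (Fin n) ℝ).symm x'‖) :=
  huang_computes_min_norm_solution_general m n A b a ha β hβ H p x hH1 hp hd hupd hx1 hx
end

section
/- Under the implicit LU recursion the Abaffian has the block structure H_{i+1} = [[0, 0], [K_i, I_{n−i}]]: for every row index j ≤ i, the j-th row of H_{i+1} is zero, and for all row and column indices j, k > i one has (H_{i+1})_{jk} = 1 if j = k and 0 otherwise. -/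
open Matrix

variable {K : Type*} [Field K] {n : ℕ}

def HasLUBlockForm (H : Matrix (Fin n) (Fin n) K) (i : ℕ) : Prop :=
  (∀ j : Fin n, (j : ℕ) < i → ∀ k : Fin n, H j k = 0) ∧
    ∀ j k : Fin n, i ≤ (j : ℕ) → i ≤ (k : ℕ) → H j k = if j = k then 1 else 0

theorem hasLUBlockForm_one : HasLUBlockForm (1 : Matrix (Fin n) (Fin n) K) 0 :=
  ⟨fun _ hj => absurd hj (Nat.not_lt_zero _), fun _ _ _ _ => one_apply⟩

/-- The pivot row `H p` vanishes on the trailing block, so the rank-one update leaves that block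
untouched, while it annihilates row `p` itself. -/
theorem HasLUBlockForm.sub_rankOne {H : Matrix (Fin n) (Fin n) K} {p : Fin n}
    (hH : HasLUBlockForm H p) (v : Fin n → K) (hδ : (H *ᵥ v) p ≠ 0) :
    HasLUBlockForm (H - ((H *ᵥ v) p)⁻¹ • vecMulVec (H *ᵥ v) (H p)) (p + 1) := by
  obtain ⟨hrows, hblock⟩ := hH
  simp only [HasLUBlockForm, Matrix.sub_apply, Matrix.smul_apply, vecMulVec_apply, smul_eq_mul]
  refine ⟨fun j hj k => ?_, fun j k hj hk => ?_⟩
  · rcases Nat.lt_succ_iff_lt_or_eq.mp hj with hlt | heq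
    · have hHv : (H *ᵥ v) j = 0 := by
        simp only [mulVec, dotProduct, hrows j hlt, zero_mul, Finset.sum_const_zero]
      rw [hrows j hlt k, hHv]
      ring
    · rw [Fin.ext heq, inv_mul_cancel_left₀ hδ, sub_self]
  · have hpk : H p k = 0 := by
      rw [hblock p k le_rfl (Nat.le_of_succ_le hk), if_neg (Fin.ne_of_lt (Fin.lt_def.mpr hk))]
    rw [hpk, mul_zero, mul_zero, sub_zero]
    exact hblock j k (Nat.le_of_succ_le hj) (Nat.le_of_succ_le hk)

/-- Under the implicit LU recursion the Abaffian has the block structure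
`H (i+1) = [[0, 0], [K_i, I_{n-i}]]`: the first `i` rows are zero and the
trailing `(n-i) × (n-i)` principal block is the identity. -/
theorem implicit_lu_abaffian_structure
    (m n : ℕ) (hmn : m ≤ n) (A : Matrix (Fin m) (Fin n) ℝ)
    (H : ℕ → Matrix (Fin n) (Fin n) ℝ)
    (hH1 : H 1 = 1)
    (hδ : ∀ j (h1 : 1 ≤ j) (h2 : j ≤ m),
      Pi.single (⟨j - 1, by omega⟩ : Fin n) 1 ⬝ᵥ
        (H j *ᵥ (Aᵀ *ᵥ Pi.single (⟨j - 1, by omega⟩ : Fin m) 1)) ≠ 0)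
    (hupd : ∀ j (h1 : 1 ≤ j) (h2 : j ≤ m),
      H (j + 1) = H j -
        (Pi.single (⟨j - 1, by omega⟩ : Fin n) 1 ⬝ᵥ
          (H j *ᵥ (Aᵀ *ᵥ Pi.single (⟨j - 1, by omega⟩ : Fin m) 1)))⁻¹ •
        vecMulVec (H j *ᵥ (Aᵀ *ᵥ Pi.single (⟨j - 1, by omega⟩ : Fin m) 1))
          (Pi.single (⟨j - 1, by omega⟩ : Fin n) 1 ᵥ* H j)) :
    ∀ i (h1 : 1 ≤ i) (h2 : i ≤ m),
      (∀ j : Fin n, (j : ℕ) < i → ∀ k : Fin n, H (i + 1) j k = 0) ∧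
      (∀ j k : Fin n, i ≤ (j : ℕ) → i ≤ (k : ℕ) →
        H (i + 1) j k = if j = k then 1 else 0) := by
  suffices h : ∀ i ≤ m, HasLUBlockForm (H (i + 1)) i from fun i _ hi => h i hi
  intro i hi
  induction i with
  | zero => exact hH1 ▸ hasLUBlockForm_one
  | succ i ih =>
    have hstep := (ih (by omega)).sub_rankOne (p := ⟨i, by omega⟩)
      (Aᵀ *ᵥ Pi.single (⟨i, by omega⟩ : Fin m) 1)
      (by simpa only [single_dotProduct, one_mul, Nat.add_sub_cancel]
        using hδ (i + 1) (by omega) hi)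
    rwa [hupd (i + 1) (by omega) hi, single_dotProduct, one_mul, single_one_vecMul]
end

section
/- Reduction of the KKT system by an Abaffian annihilating Aᵀ: suppose A has rank m and H is a real n×n matrix with H Aᵀ = 0 and rank H = n − m. Then for every x ∈ ℝⁿ, there exists y ∈ ℝ^m with B x + Aᵀ y = b if and only if H B x = H b. Consequently, x is the x-component of a solution of the KKT system if and only if A x = c and H B x = H b. -/
open Matrix

/-- Reduction of the KKT system by an Abaffian annihilating `Aᵀ`: if `rank A = m`,
`H Aᵀ = 0` and `rank H = n - m`, then `∃ y, B x + Aᵀ y = b` iff `H B x = H b`;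
consequently `x` is the `x`-component of a solution of the KKT system iff
`A x = c` and `H B x = H b`. -/
theorem kkt_reduction_by_abaffian
    (m n : ℕ) (hmn : m ≤ n)
    (B : Matrix (Fin n) (Fin n) ℝ) (hB : Bᵀ = B)
    (A : Matrix (Fin m) (Fin n) ℝ)
    (b : Fin n → ℝ) (c : Fin m → ℝ)
    (hrankA : A.rank = m)
    (H : Matrix (Fin n) (Fin n) ℝ)
    (hHA : H * Aᵀ = 0)
    (hrankH : H.rank = n - m) :
    (∀ x : Fin n → ℝ,
      (∃ y : Fin m → ℝ, B *ᵥ x + Aᵀ *ᵥ y = b) ↔ H *ᵥ (B *ᵥ x) = H *ᵥ b) ∧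
    (∀ x : Fin n → ℝ,
      (∃ y : Fin m → ℝ, B *ᵥ x + Aᵀ *ᵥ y = b ∧ A *ᵥ x = c) ↔
        (A *ᵥ x = c ∧ H *ᵥ (B *ᵥ x) = H *ᵥ b)) := by
  have hker : LinearMap.range (Aᵀ.mulVecLin) = LinearMap.ker (H.mulVecLin) := by
    have hle : LinearMap.range (Aᵀ.mulVecLin) ≤ LinearMap.ker (H.mulVecLin) := by
      rintro _ ⟨y, rfl⟩
      simp only [LinearMap.mem_ker, Matrix.mulVecLin_apply, Matrix.mulVec_mulVec, hHA,
        Matrix.zero_mulVec]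
    have hrange : Module.finrank ℝ (LinearMap.range (Aᵀ.mulVecLin)) = m := by
      have := A.rank_transpose
      rw [Matrix.rank, hrankA] at this
      exact this
    have hkerdim : Module.finrank ℝ (LinearMap.ker (H.mulVecLin)) = m := by
      have h1 := LinearMap.finrank_range_add_finrank_ker (H.mulVecLin)
      rw [show Module.finrank ℝ (LinearMap.range H.mulVecLin) = n - m from hrankH] at h1
      have h2 : Module.finrank ℝ (Fin n → ℝ) = n := by simp
      omega
    exact Submodule.eq_of_le_of_finrank_eq hle (by rw [hrange, hkerdim])
  have key : ∀ x : Fin n → ℝ,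
      (∃ y : Fin m → ℝ, B *ᵥ x + Aᵀ *ᵥ y = b) ↔ H *ᵥ (B *ᵥ x) = H *ᵥ b := by
    intro x
    constructor
    · rintro ⟨y, hy⟩
      have : H *ᵥ (B *ᵥ x + Aᵀ *ᵥ y) = H *ᵥ b := by rw [hy]
      rw [Matrix.mulVec_add, Matrix.mulVec_mulVec, Matrix.mulVec_mulVec, hHA, Matrix.zero_mulVec, add_zero, ← Matrix.mulVec_mulVec] at this
      exact this
    · intro h
      have hmem : b - B *ᵥ x ∈ LinearMap.ker (H.mulVecLin) := by
        simp only [LinearMap.mem_ker, Matrix.mulVecLin_apply, Matrix.mulVec_sub, h, sub_self]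
      rw [← hker] at hmem
      obtain ⟨y, hy⟩ := hmem
      exact ⟨y, by simp only [Matrix.mulVecLin_apply] at hy; rw [hy]; abel⟩
  refine ⟨key, fun x => ?_⟩
  constructor
  · rintro ⟨y, hy, hc⟩
    exact ⟨hc, (key x).mp ⟨y, hy⟩⟩
  · rintro ⟨hc, h⟩
    obtain ⟨y, hy⟩ := (key x).mpr h
    exact ⟨y, hy, hc⟩
end

section
/- Recovery of the multiplier from the implicit factorization: let A be a real m×n matrix, P a real n×m matrix such that L = A P is invertible, and r ∈ ℝⁿ a vector such that the system Aᵀ z = r is compatible (some z ∈ ℝ^m satisfies Aᵀ z = r). If y ∈ ℝ^m satisfies Lᵀ y = Pᵀ r, then Aᵀ y = r. -/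
open Matrix

/-- Recovery of the multiplier from the implicit factorization: if `L = A P`
is invertible, the system `Aᵀ z = r` is compatible, and `Lᵀ y = Pᵀ r`,
then `Aᵀ y = r`. -/
theorem multiplier_recovery
    (m n : ℕ) (hmn : m ≤ n)
    (A : Matrix (Fin m) (Fin n) ℝ) (P : Matrix (Fin n) (Fin m) ℝ)
    (hL : IsUnit (A * P).det)
    (r : Fin n → ℝ)
    (hcompat : ∃ z : Fin m → ℝ, Aᵀ *ᵥ z = r)
    (y : Fin m → ℝ)
    (hy : (A * P)ᵀ *ᵥ y = Pᵀ *ᵥ r) :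
    Aᵀ *ᵥ y = r := by
  obtain ⟨z, hz⟩ := hcompat
  have hz' : (A * P)ᵀ *ᵥ z = Pᵀ *ᵥ r := by
    rw [← hz, transpose_mul, ← mulVec_mulVec]
  have hdet : IsUnit ((A * P)ᵀ).det := by rwa [det_transpose]
  have hinj := (Matrix.mulVec_injective_iff_isUnit.mpr ((Matrix.isUnit_iff_isUnit_det _).mpr hdet))
  have : y = z := hinj (hy.trans hz'.symm)
  rw [this, hz]
end

section
/- Correctness of the null-space method: let Q be a real orthogonal n×n matrix and R an invertible m×m upper triangular matrix with A = [0 R] Q (where [0 R] is the m×n matrix whose first n−m columns are zero and last m columns are R). Set B̃ = Q B Qᵀ, b̃ = Q b, and for x ∈ ℝⁿ set x̃ = Q x with block components x̃₁ ∈ ℝ^{n−m}, x̃₂ ∈ ℝ^m, and partition B̃ and b̃ conformally. Then (x, y) solves the KKT system if and only if R x̃₂ = c, B̃₁₁ x̃₁ + B̃₁₂ x̃₂ = b̃₁, and Rᵀ y = b̃₂ − B̃₂₁ x̃₁ − B̃₂₂ x̃₂. -/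
/-!
Since `Q` is orthogonal, multiplying the stationarity equation by `Q` turns the KKT system for
`(B, A)` with `A = [0 R] Q` into the KKT system for `(Q B Qᵀ, [0 R])` in the unknowns `(Q x, y)`.
After splitting `Q x` into its first `n - m` and last `m` components, the constraint `[0 R] x̃ = c`
only sees `x̃₂`, and the multiplier term `[0 R]ᵀ y` vanishes in the first block row, which leaves
exactly the three block equations.
-/

open Matrix

variable {α ι κ μ ι₁ ι₂ : Type*} [CommRing α]

def IsKKTSolution [Fintype ι] [Fintype κ] (B : Matrix ι ι α) (A : Matrix κ ι α) (b : ι → α)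
    (c : κ → α) (x : ι → α) (y : κ → α) : Prop :=
  B *ᵥ x + Aᵀ *ᵥ y = b ∧ A *ᵥ x = c

theorem isKKTSolution_mul_orthogonal_iff [Fintype ι] [Fintype κ] [DecidableEq ι]
    {Q : Matrix ι ι α} (hQ : Qᵀ * Q = 1) (B : Matrix ι ι α) (M : Matrix κ ι α) (b x : ι → α)
    (c y : κ → α) :
    IsKKTSolution B (M * Q) b c x y ↔ IsKKTSolution (Q * B * Qᵀ) M (Q *ᵥ b) c (Q *ᵥ x) y := by
  have hQ' : Q * Qᵀ = 1 := mul_eq_one_comm.mp hQ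
  have hinj : Function.Injective (Q *ᵥ ·) :=
    Function.LeftInverse.injective (g := (Qᵀ *ᵥ ·)) fun v => by simp [mulVec_mulVec, hQ]
  have hconj : Q *ᵥ (B *ᵥ x + (M * Q)ᵀ *ᵥ y) = (Q * B * Qᵀ) *ᵥ (Q *ᵥ x) + Mᵀ *ᵥ y := by
    rw [mulVec_add, mulVec_mulVec, mulVec_mulVec, mulVec_mulVec, transpose_mul,
      mul_assoc (Q * B), hQ, mul_one, ← Matrix.mul_assoc, hQ', Matrix.one_mul]
  rw [IsKKTSolution, IsKKTSolution, ← hconj, hinj.eq_iff, mulVec_mulVec]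

theorem isKKTSolution_submatrix_equiv_iff [Fintype ι] [Fintype κ] [Fintype μ] (e : μ ≃ ι)
    (B : Matrix ι ι α) (M : Matrix κ μ α) (b x : ι → α) (c y : κ → α) :
    IsKKTSolution B (M.submatrix id e.symm) b c x y ↔
      IsKKTSolution (B.submatrix e e) M (b ∘ e) c (x ∘ e) y := by
  have hB : (B *ᵥ x) ∘ e = B.submatrix e e *ᵥ (x ∘ e) := by
    rw [submatrix_mulVec_equiv, Function.comp_assoc, e.self_comp_symm, Function.comp_id]
  have hMt : ((M.submatrix id e.symm)ᵀ *ᵥ y) ∘ e = Mᵀ *ᵥ y := by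
    ext i
    simp [mulVec]
  have hM : M.submatrix id e.symm *ᵥ x = M *ᵥ (x ∘ e) := by
    rw [submatrix_mulVec_equiv, e.symm_symm, Function.comp_id]
  rw [IsKKTSolution, IsKKTSolution, ← e.surjective.injective_comp_right.eq_iff, Pi.add_comp,
    hB, hMt, hM]

theorem isKKTSolution_fromCols_zero_iff [Fintype ι₁] [Fintype ι₂] [Fintype κ]
    (B : Matrix (ι₁ ⊕ ι₂) (ι₁ ⊕ ι₂) α) (R : Matrix κ ι₂ α) (b z : ι₁ ⊕ ι₂ → α) (c y : κ → α) :
    IsKKTSolution B (fromCols 0 R) b c z y ↔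
      (R *ᵥ (z ∘ Sum.inr) = c ∧
        B.toBlocks₁₁ *ᵥ (z ∘ Sum.inl) + B.toBlocks₁₂ *ᵥ (z ∘ Sum.inr) = b ∘ Sum.inl ∧
        Rᵀ *ᵥ y = b ∘ Sum.inr - B.toBlocks₂₁ *ᵥ (z ∘ Sum.inl) - B.toBlocks₂₂ *ᵥ (z ∘ Sum.inr)) := by
  rw [IsKKTSolution, ← fromBlocks_toBlocks B, ← Sum.elim_comp_inl_inr b, transpose_fromCols,
    fromBlocks_mulVec, fromRows_mulVec, fromCols_mulVec, transpose_zero, zero_mulVec,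
    zero_mulVec, zero_add, ← Sum.elim_add_add, add_zero, Sum.elim_eq_iff, sub_sub,
    eq_sub_iff_add_eq', and_comm]
  rfl

/-- Correctness of the null-space method: if `A = [0 R] Q` with `Q` orthogonal and
`R` invertible upper triangular, and `B̃ = Q B Qᵀ`, `b̃ = Q b`, `x̃ = Q x` are
partitioned conformally into the first `n - m` and last `m` components, then
`(x, y)` solves the KKT system iff `R x̃₂ = c`, `B̃₁₁ x̃₁ + B̃₁₂ x̃₂ = b̃₁`, and
`Rᵀ y = b̃₂ - B̃₂₁ x̃₁ - B̃₂₂ x̃₂`. -/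
theorem null_space_method_correct
    (m n : ℕ) (hmn : m ≤ n)
    (B : Matrix (Fin n) (Fin n) ℝ)
    (A : Matrix (Fin m) (Fin n) ℝ)
    (b : Fin n → ℝ) (c : Fin m → ℝ)
    (Q : Matrix (Fin n) (Fin n) ℝ) (hQ : Qᵀ * Q = 1)
    (R : Matrix (Fin m) (Fin m) ℝ)
    (hA : A = (fromCols (0 : Matrix (Fin m) (Fin (n - m)) ℝ) R).submatrix id
        (fun k : Fin n => finSumFinEquiv.symm (Fin.cast (by omega) k)) * Q)
    (x : Fin n → ℝ) (y : Fin m → ℝ) :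
    let e₁ : Fin (n - m) → Fin n := fun j => Fin.cast (by omega) (Fin.castAdd m j)
    let e₂ : Fin m → Fin n := fun j => Fin.cast (by omega) (Fin.natAdd (n - m) j)
    let Bt : Matrix (Fin n) (Fin n) ℝ := Q * B * Qᵀ
    let bt : Fin n → ℝ := Q *ᵥ b
    let xt : Fin n → ℝ := Q *ᵥ x
    ((B *ᵥ x + Aᵀ *ᵥ y = b ∧ A *ᵥ x = c) ↔
      (R *ᵥ (fun j => xt (e₂ j)) = c ∧
       (Bt.submatrix e₁ e₁) *ᵥ (fun j => xt (e₁ j)) +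
         (Bt.submatrix e₁ e₂) *ᵥ (fun j => xt (e₂ j)) = (fun j => bt (e₁ j)) ∧
       Rᵀ *ᵥ y = (fun j => bt (e₂ j)) -
         (Bt.submatrix e₂ e₁) *ᵥ (fun j => xt (e₁ j)) -
         (Bt.submatrix e₂ e₂) *ᵥ (fun j => xt (e₂ j)))) := by
  subst hA
  -- `E ∘ Sum.inl` and `E ∘ Sum.inr` unfold to `e₁` and `e₂`, and `E.symm` to the column
  -- reindexing in `hA`, so the lemmas below apply up to definitional unfolding.
  let E : Fin (n - m) ⊕ Fin m ≃ Fin n := finSumFinEquiv.trans (finCongr (by omega))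
  exact (isKKTSolution_mul_orthogonal_iff hQ _ _ _ _ _ _).trans <|
    (isKKTSolution_submatrix_equiv_iff E _ _ _ _ _ _).trans
      (isKKTSolution_fromCols_zero_iff _ _ _ _ _ _)
end
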